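/- For a, b in the Teichmüller set T_n of GR(4,n), define v_{a,b} = 2^{−n/2}(exp((2πi/4)·tr((a+2b)x)))_{x ∈ T_n} ∈ ℂ^{2ⁿ}. Then for each fixed a ∈ T_n, the set M_a = {v_{a,b} : b ∈ T_n} is an orthonormal basis of ℂ^{2ⁿ}. -/

import Mathlib

open scoped InnerProductSpace

/-- The Galois ring `GR(4,n) = ℤ₄[x]/⟨h(x)⟩`. -/
noncomputable abbrev GR (h : Polynomial (ZMod 4)) : Type :=
  Polynomial (ZMod 4) ⧸ Ideal.span {h}

/-- `ξ = x + ⟨h(x)⟩ ∈ GR(4,n)`. -/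
noncomputable def xi (h : Polynomial (ZMod 4)) : GR h :=
  Ideal.Quotient.mk (Ideal.span {h}) Polynomial.X

open Classical in
/-- The Teichmüller set `T_n = {0, 1, ξ, …, ξ^{2ⁿ−2}}`. -/
noncomputable def Teich (n : ℕ) (h : Polynomial (ZMod 4)) : Finset (GR h) :=
  insert 0 ((Finset.range (2 ^ n - 1)).image fun k => xi h ^ k)

structure IsBasicPrimitive (n : ℕ) (h : Polynomial (ZMod 4)) : Prop where
  monic : h.Monic
  deg : h.natDegree = n
  irred : Irreducible (h.map (ZMod.castHom (by norm_num : (2:ℕ) ∣ 4) (ZMod 2)))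
  prim : orderOf (Ideal.Quotient.mk
      (Ideal.span {h.map (ZMod.castHom (by norm_num : (2:ℕ) ∣ 4) (ZMod 2))})
      Polynomial.X) = 2 ^ n - 1
  xi_order : orderOf (xi h) = 2 ^ n - 1

/-- The vector `v_{a,b} = 2^{−n/2} (exp((2πi/4)·tr((a+2b)x)))_{x ∈ T_n}` of
`ℂ^{2ⁿ}`, indexed by the Teichmüller set `T_n`. -/
noncomputable def mv (n : ℕ) (h : Polynomial (ZMod 4)) (tr : GR h → ZMod 4)
    (a b : GR h) : EuclideanSpace ℂ (Teich n h) :=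
  WithLp.toLp 2 fun x => (1 / Real.sqrt (2 ^ n) : ℂ) *
    Complex.exp (2 * Real.pi * Complex.I *
      ((tr ((a + 2 * b) * (x : GR h))).val : ℂ) / 4)

/-!
For Teichmüller elements `a, b, b', x`, the Frobenius formula for the trace gives
`tr((a+2b')x) - tr((a+2b)x) = 2 ∑ₖ ((b'x)^{2^k} - (bx)^{2^k})`: the `ℤ₄`-parts cancel. Hence
`conj v_{a,b}(x) · v_{a,b'}(x) = 2⁻ⁿ (-1)^{Tr(c x̄)}`, where `x̄` is the reduction of `x` in the
residue field `𝔽_{2ⁿ}`, `c = b̄' - b̄` and `Tr` is the trace of `𝔽_{2ⁿ}/𝔽₂`. Reduction maps `T_n`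
bijectively onto `𝔽_{2ⁿ}`, so `⟪v_{a,b}, v_{a,b'}⟫` is `2⁻ⁿ` times the sum over `𝔽_{2ⁿ}` of the
additive character `y ↦ (-1)^{Tr(c y)}`, which vanishes for `c ≠ 0`. An orthonormal family of
`2ⁿ` vectors in `ℂ^{2ⁿ}` is a basis.
-/

open Polynomial Finset

theorem Polynomial.Monic.dvd_iff_eq_zero_of_degree_lt {R : Type*} [CommRing R] {g q : R[X]}
    (hg : g.Monic) (hq : q.degree < g.degree) : g ∣ q ↔ q = 0 :=
  ⟨fun hd => by_contra fun h0 => hg.not_dvd_of_degree_lt h0 hq hd, fun h0 => h0 ▸ dvd_zero g⟩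

theorem ZMod.conj_stdAddChar {N : ℕ} [NeZero N] (j : ZMod N) :
    starRingEnd ℂ (stdAddChar j) = stdAddChar (-j) := by
  rw [AddChar.map_neg_eq_inv, stdAddChar_apply, ← Circle.coe_inv_eq_conj, Circle.coe_inv]

theorem ZMod.sum_stdAddChar_trace_mul_eq_zero {p : ℕ} [Fact p.Prime] {F : Type*} [Field F]
    [Fintype F] [Algebra (ZMod p) F] {c : F} (hc : c ≠ 0) :
    ∑ y : F, stdAddChar (Algebra.trace (ZMod p) F (c * y)) = 0 := by
  let ψ : AddChar F ℂ :=
    (stdAddChar (N := p)).compAddMonoidHom (Algebra.trace (ZMod p) F).toAddMonoidHom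
  have hψ : ψ ≠ 1 := by
    obtain ⟨y, hy⟩ := Algebra.trace_surjective (ZMod p) F 1
    refine AddChar.ne_one_iff.mpr ⟨y, fun h1 => one_ne_zero (injective_stdAddChar (N := p) ?_)⟩
    simpa [ψ, hy] using h1
  exact AddChar.sum_eq_zero_of_ne_one (AddChar.IsPrimitive.of_ne_one hψ hc)

theorem OrthonormalBasis.exists_coe_eq_of_card_eq_finrank {ι 𝕜 E : Type*} [Fintype ι]
    [RCLike 𝕜] [NormedAddCommGroup E] [InnerProductSpace 𝕜 E] [FiniteDimensional 𝕜 E]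
    {v : ι → E} (hv : Orthonormal 𝕜 v) (hcard : Fintype.card ι = Module.finrank 𝕜 E) :
    ∃ B : OrthonormalBasis ι 𝕜 E, ⇑B = v :=
  ⟨.mk hv (hv.linearIndependent.span_eq_top_of_card_eq_finrank' hcard).ge,
    OrthonormalBasis.coe_mk _ _⟩

namespace GR

abbrev mod2 : ZMod 4 →+* ZMod 2 := ZMod.castHom (by norm_num) (ZMod 2)

theorem mod2_eq_zero_iff (z : ZMod 4) : mod2 z = 0 ↔ 2 * z = 0 := by
  revert z; decide

theorem stdAddChar_two_mul (z : ZMod 4) :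
    ZMod.stdAddChar (2 * z) = ZMod.stdAddChar (mod2 z) := by
  obtain ⟨j, rfl⟩ := ZMod.intCast_surjective z
  rw [map_intCast, ← Int.cast_two, ← Int.cast_mul, ZMod.stdAddChar_coe, ZMod.stdAddChar_coe]
  push_cast
  ring_nf

abbrev ResidueField (h : (ZMod 4)[X]) : Type := AdjoinRoot (h.map mod2)

noncomputable def reduce (h : (ZMod 4)[X]) : GR h →+* ResidueField h :=
  AdjoinRoot.map mod2 h (h.map mod2) dvd_rfl

variable {n : ℕ} {h : (ZMod 4)[X]}

theorem reduce_mk (p : (ZMod 4)[X]) :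
    reduce h (Ideal.Quotient.mk _ p) = AdjoinRoot.mk _ (p.map mod2) := by
  rw [← AdjoinRoot.aeval_eq, aeval_def, eval₂_map]
  exact Ideal.Quotient.lift_mk _ _ _

theorem reduce_xi_pow (k : ℕ) : reduce h (xi h ^ k) = AdjoinRoot.root _ ^ k := by
  rw [map_pow]
  exact congrArg (· ^ k) (AdjoinRoot.map_root _ _ _ _)

theorem reduce_algebraMap (c : ZMod 4) :
    reduce h (algebraMap (ZMod 4) (GR h) c) = algebraMap (ZMod 2) _ (mod2 c) :=
  AdjoinRoot.map_of _ _ _ _ _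

/-- On representatives of degree `< deg h`, both sides say that all coefficients lie in `2ℤ₄`. -/
theorem reduce_eq_zero_iff (hh : h.Monic) (r : GR h) : reduce h r = 0 ↔ 2 * r = 0 := by
  have : Fact (1 < 4) := ⟨by norm_num⟩
  obtain ⟨q, rfl⟩ := Ideal.Quotient.mk_surjective r
  obtain ⟨p, hp, hpq⟩ : ∃ p : (ZMod 4)[X], p.degree < h.degree ∧
      Ideal.Quotient.mk (Ideal.span {h}) p = Ideal.Quotient.mk _ q :=
    ⟨q %ₘ h, degree_modByMonic_lt _ hh, AdjoinRoot.mk_leftInverse hh (AdjoinRoot.mk h q)⟩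
  have hp2 : (p.map mod2).degree < (h.map mod2).degree :=
    degree_map_le.trans_lt (hp.trans_eq (hh.degree_map mod2).symm)
  have hp4 : (C 2 * p).degree < h.degree := by
    rw [← smul_eq_C_mul]
    exact (degree_smul_le _ _).trans_lt hp
  rw [← hpq, reduce_mk, AdjoinRoot.mk_eq_zero, (hh.map mod2).dvd_iff_eq_zero_of_degree_lt hp2,
    ← map_ofNat (Ideal.Quotient.mk _) 2, ← C_ofNat, ← map_mul, Ideal.Quotient.eq_zero_iff_mem,
    Ideal.mem_span_singleton, hh.dvd_iff_eq_zero_of_degree_lt hp4]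
  simp only [Polynomial.ext_iff, coeff_map, coeff_C_mul, coeff_zero, mod2_eq_zero_iff]

theorem algebraMap_injective (hh : h.Monic) (hdeg : 0 < h.degree) :
    Function.Injective (algebraMap (ZMod 4) (GR h)) := by
  refine (injective_iff_map_eq_zero _).mpr fun c hc => ?_
  change Ideal.Quotient.mk _ (C c) = 0 at hc
  rw [Ideal.Quotient.eq_zero_iff_mem, Ideal.mem_span_singleton,
    hh.dvd_iff_eq_zero_of_degree_lt (degree_C_le.trans_lt hdeg)] at hc
  exact C_eq_zero.mp hc

/-- `e` lies in `2ℤ₄`, on which the character of `ℤ₄` is the sign `(-1)^w` of the residue. -/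
theorem stdAddChar_eq_of_algebraMap_eq_two_mul (hh : h.Monic) (hdeg : 0 < h.degree)
    {e : ZMod 4} {s : GR h} {w : ZMod 2} (hes : algebraMap (ZMod 4) (GR h) e = 2 * s)
    (hsw : reduce h s = algebraMap (ZMod 2) _ w) : ZMod.stdAddChar e = ZMod.stdAddChar w := by
  obtain ⟨z, rfl⟩ := ZMod.castHom_surjective (show 2 ∣ 4 by norm_num) w
  have hsz : 2 * (s - algebraMap (ZMod 4) (GR h) z) = 0 := by
    rw [← reduce_eq_zero_iff hh, map_sub, hsw, reduce_algebraMap, sub_self]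
  have hez : e = 2 * z := algebraMap_injective hh hdeg (by
    rw [map_mul, map_ofNat, hes]; linear_combination hsz)
  rw [hez, stdAddChar_two_mul]

theorem mem_Teich {x : GR h} : x ∈ Teich n h ↔ x = 0 ∨ ∃ k < 2 ^ n - 1, xi h ^ k = x := by
  simp [Teich]

theorem zero_mem_Teich : (0 : GR h) ∈ Teich n h := mem_Teich.mpr (.inl rfl)

theorem mul_mem_Teich (hξ : orderOf (xi h) = 2 ^ n - 1) {x y : GR h} (hx : x ∈ Teich n h)
    (hy : y ∈ Teich n h) : x * y ∈ Teich n h := by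
  rcases mem_Teich.mp hx with rfl | ⟨j, hj, rfl⟩
  · simpa using zero_mem_Teich
  rcases mem_Teich.mp hy with rfl | ⟨k, -, rfl⟩
  · simpa using zero_mem_Teich
  refine mem_Teich.mpr (.inr ⟨(j + k) % (2 ^ n - 1), Nat.mod_lt _ (by omega), ?_⟩)
  rw [← hξ, pow_mod_orderOf, pow_add]

theorem sq_mem_Teich (hξ : orderOf (xi h) = 2 ^ n - 1) {x : GR h} (hx : x ∈ Teich n h) :
    x ^ 2 ∈ Teich n h :=
  sq x ▸ mul_mem_Teich hξ hx hx

theorem card_Teich_le : #(Teich n h) ≤ 2 ^ n := by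
  classical
  calc #(Teich n h) ≤ #((range (2 ^ n - 1)).image (xi h ^ ·)) + 1 := card_insert_le _ _
    _ ≤ 2 ^ n - 1 + 1 := by grw [card_image_le, card_range]
    _ = 2 ^ n := Nat.sub_add_cancel Nat.one_le_two_pow

section Frobenius

variable {σ : GR h → GR h} {tr : GR h → ZMod 4}

theorem iterate_frobenius_Teich (hξ : orderOf (xi h) = 2 ^ n - 1)
    (hσ : ∀ a b : GR h, a ∈ Teich n h → b ∈ Teich n h → σ (a + 2 * b) = a ^ 2 + 2 * b ^ 2)
    (k : ℕ) {y z : GR h} (hy : y ∈ Teich n h) (hz : z ∈ Teich n h) :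
    σ^[k] (y + 2 * z) = y ^ 2 ^ k + 2 * z ^ 2 ^ k := by
  induction k generalizing y z with
  | zero => simp
  | succ k ih =>
    rw [Function.iterate_succ_apply, hσ y z hy hz, ih (sq_mem_Teich hξ hy) (sq_mem_Teich hξ hz),
      ← pow_mul, ← pow_mul, ← pow_succ']

theorem algebraMap_trace_sub_trace (hξ : orderOf (xi h) = 2 ^ n - 1)
    (hσ : ∀ a b : GR h, a ∈ Teich n h → b ∈ Teich n h → σ (a + 2 * b) = a ^ 2 + 2 * b ^ 2)
    (htr : ∀ r : GR h, algebraMap (ZMod 4) (GR h) (tr r) = ∑ k ∈ range n, σ^[k] r)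
    {y z z' : GR h} (hy : y ∈ Teich n h) (hz : z ∈ Teich n h) (hz' : z' ∈ Teich n h) :
    algebraMap (ZMod 4) (GR h) (tr (y + 2 * z') - tr (y + 2 * z)) =
      2 * ∑ k ∈ range n, (z' ^ 2 ^ k - z ^ 2 ^ k) := by
  simp only [map_sub, htr, iterate_frobenius_Teich hξ hσ _ hy hz,
    iterate_frobenius_Teich hξ hσ _ hy hz', ← sum_sub_distrib, mul_sum]
  exact sum_congr rfl fun k _ => by ring

end Frobenius

section ResidueField

variable [Fact (Irreducible (h.map mod2))]

instance : Module.Finite (ZMod 2) (ResidueField h) :=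
  (AdjoinRoot.powerBasis (Fact.out : Irreducible (h.map mod2)).ne_zero).finite

instance : Finite (ResidueField h) := Module.finite_of_finite (ZMod 2)

instance : CharP (ResidueField h) 2 := charP_of_injective_algebraMap' (ZMod 2) 2

theorem finrank_residueField (hh : h.Monic) :
    Module.finrank (ZMod 2) (ResidueField h) = h.natDegree := by
  rw [(AdjoinRoot.powerBasis (Fact.out : Irreducible (h.map mod2)).ne_zero).finrank,
    AdjoinRoot.powerBasis_dim, hh.natDegree_map]

theorem degree_pos (hh : h.Monic) : 0 < h.degree :=
  hh.degree_map mod2 ▸ degree_pos_of_irreducible Fact.out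

theorem reduce_sum_sub_pow (hh : h.Monic) (u v : GR h) :
    reduce h (∑ k ∈ range h.natDegree, (u ^ 2 ^ k - v ^ 2 ^ k)) =
      algebraMap (ZMod 2) _
        (Algebra.trace (ZMod 2) (ResidueField h) (reduce h u - reduce h v)) := by
  rw [FiniteField.algebraMap_trace_eq_sum_pow, finrank_residueField hh, Nat.card_zmod, map_sum]
  simp only [map_sub, map_pow, sub_pow_char_pow]

theorem image_reduce_Teich :
    (Teich n h).image (reduce h) =
      insert 0 ((range (2 ^ n - 1)).image (AdjoinRoot.root (h.map mod2) ^ ·)) := by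
  classical
  simp only [Teich, image_insert, image_image, map_zero]
  congr 1
  exact image_congr fun k _ => reduce_xi_pow k

theorem card_image_reduce_Teich (hρ : orderOf (AdjoinRoot.root (h.map mod2)) = 2 ^ n - 1) :
    #((Teich n h).image (reduce h)) = 2 ^ n := by
  have hnz : 0 ∉ (range (2 ^ n - 1)).image (AdjoinRoot.root (h.map mod2) ^ ·) := by
    simp only [mem_image, mem_range, not_exists, not_and]
    intro k hk
    exact ((isOfFinOrder_iff_pow_eq_one.mpr
      ⟨_, by omega, hρ ▸ pow_orderOf_eq_one _⟩).isUnit.pow k).ne_zero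
  rw [image_reduce_Teich, card_insert_of_notMem hnz, card_image_of_injOn, card_range,
    Nat.sub_add_cancel Nat.one_le_two_pow]
  exact hρ ▸ pow_injOn_Iio_orderOf.mono fun k hk => by simpa using hk

theorem card_Teich (hρ : orderOf (AdjoinRoot.root (h.map mod2)) = 2 ^ n - 1) :
    #(Teich n h) = 2 ^ n :=
  card_Teich_le.antisymm (card_image_reduce_Teich hρ ▸ card_image_le)

theorem injOn_reduce_Teich (hρ : orderOf (AdjoinRoot.root (h.map mod2)) = 2 ^ n - 1) :
    Set.InjOn (reduce h) (Teich n h) :=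
  injOn_of_card_image_eq (by rw [card_image_reduce_Teich hρ, card_Teich hρ])

theorem sum_Teich_comp_reduce [Fintype (ResidueField h)] (hh : h.Monic)
    (hdeg : h.natDegree = n) (hρ : orderOf (AdjoinRoot.root (h.map mod2)) = 2 ^ n - 1)
    {M : Type*} [AddCommMonoid M] (f : ResidueField h → M) :
    ∑ x : Teich n h, f (reduce h x) = ∑ y, f y := by
  have himage : (Teich n h).image (reduce h) = univ := by
    refine eq_univ_of_card _ ?_
    rw [card_image_reduce_Teich hρ, Fintype.card_eq_nat_card,
      Module.natCard_eq_pow_finrank (K := ZMod 2), Nat.card_zmod, finrank_residueField hh, hdeg]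
  rw [sum_coe_sort (Teich n h) fun x => f (reduce h x), ← himage,
    sum_image (injOn_reduce_Teich hρ)]

theorem stdAddChar_trace_sub_trace {σ : GR h → GR h} {tr : GR h → ZMod 4}
    (hbp : IsBasicPrimitive n h)
    (hσ : ∀ a b : GR h, a ∈ Teich n h → b ∈ Teich n h → σ (a + 2 * b) = a ^ 2 + 2 * b ^ 2)
    (htr : ∀ r : GR h, algebraMap (ZMod 4) (GR h) (tr r) = ∑ k ∈ range n, σ^[k] r)
    {a b b' x : GR h} (ha : a ∈ Teich n h) (hb : b ∈ Teich n h) (hb' : b' ∈ Teich n h)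
    (hx : x ∈ Teich n h) :
    ZMod.stdAddChar (tr ((a + 2 * b') * x) - tr ((a + 2 * b) * x)) =
      ZMod.stdAddChar (Algebra.trace (ZMod 2) (ResidueField h)
        ((reduce h b' - reduce h b) * reduce h x)) := by
  have hmul : ∀ c, (a + 2 * c) * x = a * x + 2 * (c * x) := fun c => by ring
  rw [hmul, hmul]
  refine stdAddChar_eq_of_algebraMap_eq_two_mul hbp.monic (degree_pos hbp.monic)
    (algebraMap_trace_sub_trace hbp.xi_order hσ htr (mul_mem_Teich hbp.xi_order ha hx)
      (mul_mem_Teich hbp.xi_order hb hx) (mul_mem_Teich hbp.xi_order hb' hx)) ?_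
  rw [← hbp.deg, reduce_sum_sub_pow hbp.monic, map_mul, map_mul, sub_mul]

end ResidueField

variable {tr : GR h → ZMod 4}

theorem mv_apply (a b : GR h) (x : Teich n h) :
    mv n h tr a b x = (1 / Real.sqrt (2 ^ n) : ℂ) * ZMod.stdAddChar (tr ((a + 2 * b) * x)) := by
  rw [ZMod.stdAddChar_apply, ZMod.toCircle_apply]
  push_cast
  rfl

theorem inner_mv (a b b' : GR h) :
    ⟪mv n h tr a b, mv n h tr a b'⟫_ℂ = (2 ^ n : ℂ)⁻¹ *
      ∑ x : Teich n h, ZMod.stdAddChar (tr ((a + 2 * b') * x) - tr ((a + 2 * b) * x)) := by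
  have hN : (1 / Real.sqrt (2 ^ n) : ℂ) * (1 / Real.sqrt (2 ^ n)) = (2 ^ n)⁻¹ := by
    rw [one_div_mul_one_div, ← Complex.ofReal_mul, Real.mul_self_sqrt (by positivity)]
    push_cast
    rw [one_div]
  simp only [PiLp.inner_apply, RCLike.inner_apply, mv_apply, mul_sum]
  refine sum_congr rfl fun x _ => ?_
  rw [map_mul, ZMod.conj_stdAddChar, map_div₀, map_one, Complex.conj_ofReal, sub_eq_add_neg,
    AddChar.map_add_eq_mul, ← hN]
  ring

theorem orthonormal_mv {σ : GR h → GR h} (hbp : IsBasicPrimitive n h)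
    (hσ : ∀ a b : GR h, a ∈ Teich n h → b ∈ Teich n h → σ (a + 2 * b) = a ^ 2 + 2 * b ^ 2)
    (htr : ∀ r : GR h, algebraMap (ZMod 4) (GR h) (tr r) = ∑ k ∈ range n, σ^[k] r)
    {a : GR h} (ha : a ∈ Teich n h) :
    Orthonormal ℂ fun b : Teich n h => mv n h tr a b := by
  classical
  have : Fact (Irreducible (h.map mod2)) := ⟨hbp.irred⟩
  let := Fintype.ofFinite (ResidueField h)
  rw [orthonormal_iff_ite]
  rintro ⟨b, hb⟩ ⟨b', hb'⟩
  rw [inner_mv]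
  split_ifs with hbb
  · simp [Subtype.mk.inj hbb, card_Teich hbp.prim]
  · have hc : reduce h b' - reduce h b ≠ 0 := sub_ne_zero.mpr fun he =>
      hbb (Subtype.ext (injOn_reduce_Teich hbp.prim hb' hb he).symm)
    rw [sum_congr rfl fun x _ => stdAddChar_trace_sub_trace hbp hσ htr ha hb hb' x.2,
      sum_Teich_comp_reduce hbp.monic hbp.deg hbp.prim
        (fun y => ZMod.stdAddChar (Algebra.trace (ZMod 2) _ ((reduce h b' - reduce h b) * y))),
      ZMod.sum_stdAddChar_trace_mul_eq_zero hc, mul_zero]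

end GR

/-- For each fixed `a` in the Teichmüller set, `M_a = {v_{a,b} : b ∈ T_n}` is an
orthonormal basis of `ℂ^{2ⁿ}`.  Here `tr` is the trace map of `GR(4,n)`,
`tr(x) = ∑_{k<n} σ^k(x)` with Frobenius `σ(a+2b) = a² + 2b²`. -/
theorem Ma_orthonormal_basis (n : ℕ) (h : Polynomial (ZMod 4))
    (hbp : IsBasicPrimitive n h)
    (σ : GR h → GR h)
    (hσ : ∀ a b : GR h, a ∈ Teich n h → b ∈ Teich n h →
      σ (a + 2 * b) = a ^ 2 + 2 * b ^ 2)
    (tr : GR h → ZMod 4)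
    (htr : ∀ r : GR h,
      algebraMap (ZMod 4) (GR h) (tr r) = ∑ k ∈ Finset.range n, σ^[k] r)
    (a : GR h) (ha : a ∈ Teich n h) :
    ∃ B : OrthonormalBasis (Teich n h) ℂ (EuclideanSpace ℂ (Teich n h)),
      ∀ b : Teich n h, B b = mv n h tr a (b : GR h) := by
  obtain ⟨B, hB⟩ := OrthonormalBasis.exists_coe_eq_of_card_eq_finrank
    (GR.orthonormal_mv hbp hσ htr ha) finrank_euclideanSpace.symm
  exact ⟨B, congrFun hB⟩
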